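/- arXiv:math/0605350 — 2 statements merged into one kernel-verified Lean document; each statement's English description precedes it below -/
import Mathlib

section
/- Let M(2n,k) be the (2n×2n) upper bidiagonal matrix with diagonal (k,1,...,1) and superdiagonal (k/(2n), 2n/(2n-1), (2n-1)/(2n-2), ..., 3/2), where k ≥ 2n+1. Set 𝔠¹ = ⋃_{v∈ℤ^{2n}} (M(2n,k)v + [0,1]^{2n}) and 𝔠^j = (j-1)e₁ + 𝔠¹ for j = 2,...,k. Then ⋃_{j=1}^k 𝔠^j = ℝ^{2n}, and the interiors of the sets 𝔠^j are pairwise disjoint. -/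
noncomputable section

open Matrix

/-- The matrix `M(2n,k)`: upper bidiagonal with diagonal `(k,1,…,1)` and
superdiagonal `(k/(2n), 2n/(2n-1), (2n-1)/(2n-2), …, 3/2)`. -/
def Mmat (n k : ℕ) : Matrix (Fin (2 * n)) (Fin (2 * n)) ℝ := fun i j =>
  if (j : ℕ) = (i : ℕ) then (if (i : ℕ) = 0 then (k : ℝ) else 1)
  else if (j : ℕ) = (i : ℕ) + 1 then
    (if (i : ℕ) = 0 then (k : ℝ) / (2 * n) else ((2 * n : ℝ) - (i : ℕ) + 1) / ((2 * n : ℝ) - (i : ℕ)))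
  else 0

/-- The closed unit cube `[0,1]^{2n}`. -/
def unitCube (n : ℕ) : Set (Fin (2 * n) → ℝ) := {x | ∀ i, x i ∈ Set.Icc (0 : ℝ) 1}

/-- The first standard basis vector `e₁` of `ℝ^{2n}`. -/
def e1 (n : ℕ) : Fin (2 * n) → ℝ := fun i => if (i : ℕ) = 0 then 1 else 0

/-- The union of cubes `𝔠¹(2n,k) = ⋃_{v ∈ ℤ^{2n}} (M(2n,k)v + [0,1]^{2n})`. -/
def frakC1 (n k : ℕ) : Set (Fin (2 * n) → ℝ) :=
  ⋃ v : Fin (2 * n) → ℤ, (fun x => (Mmat n k).mulVec (fun i => (v i : ℝ)) + x) '' unitCube n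

/-- The `j`-th colour `𝔠^j(2n,k) = (j-1)e₁ + 𝔠¹(2n,k)` (here `j : Fin k` is zero-based). -/
def frakC (n k : ℕ) (j : Fin k) : Set (Fin (2 * n) → ℝ) :=
  (fun x => ((j : ℕ) : ℝ) • e1 n + x) '' frakC1 n k

/-! ### Auxiliary machinery -/

/-- Superdiagonal entries of `Mmat`, as a function of the row index in `ℕ`. -/
def sd (n k : ℕ) (i : ℕ) : ℝ :=
  if i = 0 then (k : ℝ) / (2 * n) else ((2 * n : ℝ) - i + 1) / ((2 * n : ℝ) - i)

/-- The translate vector `w(m, v) = m·e₁ + M v`. -/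
def wv (n k : ℕ) (m : ℤ) (v : Fin (2 * n) → ℤ) (i : Fin (2 * n)) : ℝ :=
  (m : ℝ) * e1 n i + (Mmat n k).mulVec (fun t => (v t : ℝ)) i

lemma wv_apply (n k : ℕ) (m : ℤ) (v : Fin (2 * n) → ℤ) (i : Fin (2 * n)) :
    wv n k m v i = (if (i : ℕ) = 0 then (m : ℝ) + (k : ℝ) * (v i : ℝ) else (v i : ℝ))
      + (if h : (i : ℕ) + 1 < 2 * n then sd n k i * (v ⟨(i : ℕ) + 1, h⟩ : ℝ) else 0) := by
  have hM : ∀ j : Fin (2 * n), Mmat n k i j * (v j : ℝ) =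
      (if j = i then (if (i : ℕ) = 0 then (k : ℝ) else 1) * (v i : ℝ) else 0)
      + (if (j : ℕ) = (i : ℕ) + 1 then sd n k i * (v j : ℝ) else 0) := by
    intro j
    by_cases h1 : (j : ℕ) = (i : ℕ)
    · have hj : j = i := Fin.ext h1
      subst hj
      simp [Mmat, sd]
    · have hj : j ≠ i := fun h => h1 (by rw [h])
      by_cases h2 : (j : ℕ) = (i : ℕ) + 1
      · simp [Mmat, sd, h1, h2, hj]
      · simp [Mmat, h1, h2, hj]
  have hmv : (Mmat n k).mulVec (fun t => (v t : ℝ)) i = ∑ j, Mmat n k i j * (v j : ℝ) := rfl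
  rw [wv, hmv, Finset.sum_congr rfl (fun j _ => hM j), Finset.sum_add_distrib]
  have h1 : (∑ j : Fin (2 * n), if j = i then (if (i : ℕ) = 0 then (k : ℝ) else 1) * (v i : ℝ) else 0)
      = (if (i : ℕ) = 0 then (k : ℝ) else 1) * (v i : ℝ) := by
    rw [Finset.sum_ite_eq' Finset.univ i]
    simp
  have h2 : (∑ j : Fin (2 * n), if (j : ℕ) = (i : ℕ) + 1 then sd n k i * (v j : ℝ) else 0)
      = (if h : (i : ℕ) + 1 < 2 * n then sd n k i * (v ⟨(i : ℕ) + 1, h⟩ : ℝ) else 0) := by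
    by_cases h : (i : ℕ) + 1 < 2 * n
    · rw [dif_pos h]
      have : ∀ j : Fin (2 * n), ((j : ℕ) = (i : ℕ) + 1) ↔ j = ⟨(i : ℕ) + 1, h⟩ := by
        intro j; rw [Fin.ext_iff]
      rw [Finset.sum_congr rfl (fun j _ => by rw [if_congr (this j) rfl rfl])]
      rw [Finset.sum_ite_eq' Finset.univ (⟨(i : ℕ) + 1, h⟩ : Fin (2 * n))]
      simp
    · rw [dif_neg h]
      apply Finset.sum_eq_zero
      intro j _
      rw [if_neg]
      intro hj
      exact h (hj ▸ j.isLt)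
  rw [h1, h2, e1]
  by_cases h0 : (i : ℕ) = 0 <;> simp [h0] <;> ring

lemma sub_floor_mem (a : ℝ) : a - (⌊a⌋ : ℝ) ∈ Set.Ico (0 : ℝ) 1 := by
  rw [Int.self_sub_floor]
  exact ⟨Int.fract_nonneg a, Int.fract_lt_one a⟩

/-- The downward greedy recursion. -/
def gseq (n k : ℕ) (X : ℕ → ℝ) : ℕ → ℤ
  | 0 => ⌊X (2 * n - 1)⌋
  | t + 1 => ⌊X (2 * n - 2 - t) - sd n k (2 * n - 2 - t) * ((gseq n k X t : ℤ) : ℝ)⌋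

def vtail (n k : ℕ) (X : ℕ → ℝ) (i : ℕ) : ℤ := gseq n k X (2 * n - 1 - i)

lemma vtail_last (n k : ℕ) (X : ℕ → ℝ) : vtail n k X (2 * n - 1) = ⌊X (2 * n - 1)⌋ := by
  simp [vtail, gseq]

lemma vtail_mid (n k : ℕ) (X : ℕ → ℝ) (i : ℕ) (h1 : i < 2 * n - 1) :
    vtail n k X i = ⌊X i - sd n k i * (vtail n k X (i + 1) : ℝ)⌋ := by
  have h2 : 2 * n - 1 - i = (2 * n - 2 - i) + 1 := by omega
  have h3 : 2 * n - 2 - (2 * n - 2 - i) = i := by omega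
  have h4 : 2 * n - 1 - (i + 1) = 2 * n - 2 - i := by omega
  rw [vtail, h2, gseq, h3, vtail, h4]

/-- Existence: every point is covered by a half-open cube with colour `m ∈ [0,k)`. -/
lemma exists_cover (n k : ℕ) (hn : 0 < n) (hk : 1 ≤ k) (x : Fin (2 * n) → ℝ) :
    ∃ m : ℤ, 0 ≤ m ∧ m < k ∧ ∃ v : Fin (2 * n) → ℤ,
      ∀ i, x i - wv n k m v i ∈ Set.Ico (0 : ℝ) 1 := by
  set X : ℕ → ℝ := fun t => if h : t < 2 * n then x ⟨t, h⟩ else 0 with hX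
  set N : ℤ := ⌊X 0 - sd n k 0 * (vtail n k X 1 : ℝ)⌋ with hN
  have hk' : (0 : ℤ) < (k : ℤ) := by exact_mod_cast hk
  refine ⟨N % k, Int.emod_nonneg N (by omega), Int.emod_lt_of_pos N hk', ?_⟩
  set v : Fin (2 * n) → ℤ := fun i => if (i : ℕ) = 0 then N / k else vtail n k X (i : ℕ)
    with hvdef
  have hv0 : ∀ i : Fin (2 * n), (i : ℕ) = 0 → v i = N / k := by
    intro i h; simp [hvdef, h]
  have hvpos : ∀ i : Fin (2 * n), (i : ℕ) ≠ 0 → v i = vtail n k X (i : ℕ) := by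
    intro i h; simp [hvdef, h]
  refine ⟨v, fun i => ?_⟩
  have hXi : X (i : ℕ) = x i := by
    simp only [hX]
    rw [dif_pos i.isLt]
  rw [wv_apply]
  by_cases h0 : (i : ℕ) = 0
  · have hlt : (i : ℕ) + 1 < 2 * n := by omega
    rw [if_pos h0, dif_pos hlt]
    rw [hv0 i h0, hvpos ⟨(i : ℕ) + 1, hlt⟩ (by simp)]
    have hNk : ((N % k : ℤ) : ℝ) + (k : ℝ) * ((N / k : ℤ) : ℝ) = (N : ℝ) := by
      have h := Int.emod_add_mul_ediv N k
      calc ((N % k : ℤ) : ℝ) + (k : ℝ) * ((N / k : ℤ) : ℝ)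
          = ((N % k + k * (N / k) : ℤ) : ℝ) := by push_cast; ring
        _ = (N : ℝ) := by rw [h]
    have hval : ((⟨(i : ℕ) + 1, hlt⟩ : Fin (2 * n)) : ℕ) = 1 := by
      simp only [Fin.val_mk]; omega
    have hx0 : x i = X 0 := by rw [← h0, hXi]
    rw [hval, hNk, hx0]
    have hmem := sub_floor_mem (X 0 - sd n k 0 * (vtail n k X 1 : ℝ))
    rw [← hN] at hmem
    have hsd : sd n k ((i : ℕ)) = sd n k 0 := by rw [h0]
    rw [hsd]
    constructor
    · linarith [hmem.1]
    · linarith [hmem.2]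
  · rw [if_neg h0, hvpos i h0]
    by_cases hlt : (i : ℕ) + 1 < 2 * n
    · rw [dif_pos hlt]
      rw [hvpos ⟨(i : ℕ) + 1, hlt⟩ (by simp)]
      have hval : ((⟨(i : ℕ) + 1, hlt⟩ : Fin (2 * n)) : ℕ) = (i : ℕ) + 1 := rfl
      rw [hval]
      have hmid := vtail_mid n k X (i : ℕ) (by omega)
      rw [hmid, ← hXi]
      have hmem := sub_floor_mem (X (i : ℕ) - sd n k (i : ℕ) * (vtail n k X ((i : ℕ) + 1) : ℝ))
      constructor
      · linarith [hmem.1]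
      · linarith [hmem.2]
    · rw [dif_neg hlt]
      have hival : (i : ℕ) = 2 * n - 1 := by have := i.isLt; omega
      rw [hival, vtail_last, ← hXi, hival]
      have hmem := sub_floor_mem (X (2 * n - 1))
      constructor
      · linarith [hmem.1]
      · linarith [hmem.2]

lemma int_cast_bound {a b : ℤ} (h1 : (-1 : ℝ) < (a : ℝ) - (b : ℝ)) (h2 : (a : ℝ) - (b : ℝ) < 1) :
    a = b := by
  have h1' : (-1 : ℤ) < a - b := by exact_mod_cast (by push_cast; linarith : ((-1 : ℤ) : ℝ) < ((a - b : ℤ) : ℝ))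
  have h2' : a - b < 1 := by exact_mod_cast (by push_cast; linarith : ((a - b : ℤ) : ℝ) < ((1 : ℤ) : ℝ))
  omega

/-- Uniqueness of the half-open covering. -/
lemma uniq_cover (n k : ℕ) (hn : 0 < n) (m m' : ℤ) (hm0 : 0 ≤ m) (hmk : m < k)
    (hm0' : 0 ≤ m') (hmk' : m' < k) (v v' : Fin (2 * n) → ℤ) (x : Fin (2 * n) → ℝ)
    (H : ∀ i, x i - wv n k m v i ∈ Set.Ico (0 : ℝ) 1)
    (H' : ∀ i, x i - wv n k m' v' i ∈ Set.Ico (0 : ℝ) 1) :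
    m = m' ∧ v = v' := by
  have key : ∀ t : ℕ, ∀ i : Fin (2 * n), (i : ℕ) + t + 1 = 2 * n → 1 ≤ (i : ℕ) → v i = v' i := by
    intro t
    induction t with
    | zero =>
      intro i hit h1
      have hlt : ¬ ((i : ℕ) + 1 < 2 * n) := by omega
      have h0 : ¬ ((i : ℕ) = 0) := by omega
      have e := H i; have e' := H' i
      rw [wv_apply, dif_neg hlt, if_neg h0] at e e'
      obtain ⟨e1, e2⟩ := e; obtain ⟨e1', e2'⟩ := e'
      apply int_cast_bound (a := v i) (b := v' i) <;> simp only [add_zero] at e1 e2 e1' e2' <;> linarith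
    | succ t ih =>
      intro i hit h1
      have hlt : (i : ℕ) + 1 < 2 * n := by omega
      have hv1 : v ⟨(i : ℕ) + 1, hlt⟩ = v' ⟨(i : ℕ) + 1, hlt⟩ := by
        apply ih ⟨(i : ℕ) + 1, hlt⟩ (by simp; omega) (by simp)
      have e := H i; have e' := H' i
      rw [wv_apply, dif_pos hlt, if_neg (by omega : ¬ ((i : ℕ) = 0))] at e e'
      rw [hv1] at e
      obtain ⟨e1, e2⟩ := e; obtain ⟨e1', e2'⟩ := e'
      apply int_cast_bound (a := v i) (b := v' i) <;> linarith
  have hi0lt : (0 : ℕ) < 2 * n := by omega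
  have h1lt : (0 : ℕ) + 1 < 2 * n := by omega
  set i0 : Fin (2 * n) := ⟨0, hi0lt⟩ with hi0
  have hv1 : v ⟨(i0 : ℕ) + 1, h1lt⟩ = v' ⟨(i0 : ℕ) + 1, h1lt⟩ := by
    apply key (2 * n - 2) ⟨(i0 : ℕ) + 1, h1lt⟩ (by simp [hi0]; omega) (by simp [hi0])
  have e := H i0; have e' := H' i0
  rw [wv_apply, dif_pos h1lt, if_pos (rfl : (i0 : ℕ) = 0)] at e e'
  rw [hv1] at e
  obtain ⟨e1, e2⟩ := e; obtain ⟨e1', e2'⟩ := e'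
  have habs : m + k * v i0 = m' + k * v' i0 := by
    apply int_cast_bound (a := m + k * v i0) (b := m' + k * v' i0) <;> push_cast <;> linarith
  have hmain : v i0 = v' i0 ∧ m = m' := by
    rcases lt_trichotomy (v i0) (v' i0) with h | h | h
    · exfalso
      have hle : (k : ℤ) * (v i0 + 1) ≤ (k : ℤ) * (v' i0) :=
        mul_le_mul_of_nonneg_left (by omega) (by omega)
      rw [mul_add, mul_one] at hle
      omega
    · rw [h] at habs
      exact ⟨h, by omega⟩
    · exfalso
      have hle : (k : ℤ) * (v' i0 + 1) ≤ (k : ℤ) * (v i0) :=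
        mul_le_mul_of_nonneg_left (by omega) (by omega)
      rw [mul_add, mul_one] at hle
      omega
  have hmm : m = m' := hmain.2
  refine ⟨hmm, funext fun i => ?_⟩
  by_cases h0 : (i : ℕ) = 0
  · have : i = i0 := Fin.ext h0
    rw [this]
    exact hmain.1
  · exact key (2 * n - 1 - (i : ℕ)) i (by have := i.isLt; omega) (by omega)

/-- Membership criterion for `frakC`. -/
lemma mem_frakC_iff (n k : ℕ) (j : Fin k) (x : Fin (2 * n) → ℝ) :
    x ∈ frakC n k j ↔ ∃ v : Fin (2 * n) → ℤ,
      ∀ i, x i - wv n k ((j : ℕ) : ℤ) v i ∈ Set.Icc (0 : ℝ) 1 := by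
  constructor
  · rintro ⟨z, hz, rfl⟩
    rw [frakC1, Set.mem_iUnion] at hz
    obtain ⟨v, y, hy, rfl⟩ := hz
    refine ⟨v, fun i => ?_⟩
    have heq : (((j : ℕ) : ℝ) • e1 n + ((Mmat n k).mulVec (fun t => (v t : ℝ)) + y)) i
        - wv n k ((j : ℕ) : ℤ) v i = y i := by
      simp only [wv, Pi.add_apply, Pi.smul_apply, smul_eq_mul, Int.cast_natCast]
      ring
    rw [heq]
    exact hy i
  · rintro ⟨v, hv⟩
    refine ⟨fun t => x t - ((j : ℕ) : ℝ) * e1 n t, ?_, ?_⟩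
    · rw [frakC1, Set.mem_iUnion]
      refine ⟨v, fun t => x t - ((j : ℕ) : ℝ) * e1 n t
        - (Mmat n k).mulVec (fun s => (v s : ℝ)) t, fun i => ?_, ?_⟩
      · show x i - ((j : ℕ) : ℝ) * e1 n i
            - (Mmat n k).mulVec (fun s => (v s : ℝ)) i ∈ Set.Icc (0 : ℝ) 1
        have : x i - ((j : ℕ) : ℝ) * e1 n i - (Mmat n k).mulVec (fun s => (v s : ℝ)) i
            = x i - wv n k ((j : ℕ) : ℤ) v i := by
          simp only [wv, Int.cast_natCast]; ring
        rw [this]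
        exact hv i
      · funext t
        simp only [Pi.add_apply]
        ring
    · funext t
      simp only [Pi.add_apply, Pi.smul_apply, smul_eq_mul]
      ring

lemma exists_avoid (a ε : ℝ) (hε : 0 < ε) (S : Set ℝ) (hS : S.Countable) :
    ∃ r : ℝ, |r - a| < ε ∧ r ∉ S := by
  by_contra h
  push_neg at h
  have hsub : Set.Ioo (a - ε) (a + ε) ⊆ S := by
    intro r hr
    exact h r (by rw [abs_sub_lt_iff]; constructor <;> [linarith [hr.2]; linarith [hr.1]])
  have h1 : MeasureTheory.volume (Set.Ioo (a - ε) (a + ε)) ≤ MeasureTheory.volume S :=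
    MeasureTheory.measure_mono hsub
  rw [hS.measure_zero, Real.volume_Ioo] at h1
  have : a + ε - (a - ε) = 2 * ε := by ring
  rw [this] at h1
  simp only [nonpos_iff_eq_zero, ENNReal.ofReal_eq_zero] at h1
  linarith

/-- **The dimension cover.** For `k ≥ 2n+1` the sets `𝔠¹(2n,k), …, 𝔠^k(2n,k)` cover
`ℝ^{2n}`, and their interiors are pairwise disjoint. -/
theorem dimension_cover (n k : ℕ) (hn : 0 < n) (hk : 2 * n + 1 ≤ k) :
    (⋃ j : Fin k, frakC n k j) = Set.univ ∧
    ∀ j j' : Fin k, j ≠ j' → Disjoint (interior (frakC n k j)) (interior (frakC n k j')) := by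
  have hk1 : 1 ≤ k := by omega
  constructor
  · ext x
    simp only [Set.mem_univ, iff_true, Set.mem_iUnion]
    obtain ⟨m, hm0, hmk, v, hv⟩ := exists_cover n k hn hk1 x
    have hmtk : m.toNat < k := by omega
    refine ⟨⟨m.toNat, hmtk⟩, ?_⟩
    rw [mem_frakC_iff]
    refine ⟨v, fun i => ?_⟩
    have hcast : (((⟨m.toNat, hmtk⟩ : Fin k) : ℕ) : ℤ) = m := by
      simp only [Fin.val_mk]; omega
    rw [hcast]
    exact Set.Ico_subset_Icc_self (hv i)
  · intro j j' hne
    rw [Set.disjoint_left]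
    intro x hx hx'
    have hO : IsOpen (interior (frakC n k j) ∩ interior (frakC n k j')) :=
      isOpen_interior.inter isOpen_interior
    obtain ⟨ε, hε, hball⟩ := Metric.isOpen_iff.mp hO x ⟨hx, hx'⟩
    set S : Fin (2 * n) → Set ℝ := fun i =>
      (Set.range fun p : ℤ × (Fin (2 * n) → ℤ) => wv n k p.1 p.2 i) ∪
      (Set.range fun p : ℤ × (Fin (2 * n) → ℤ) => wv n k p.1 p.2 i + 1) with hS
    have hScount : ∀ i, (S i).Countable := fun i =>
      (Set.countable_range _).union (Set.countable_range _)
    have hpick : ∀ i : Fin (2 * n), ∃ r : ℝ, |r - x i| < ε ∧ r ∉ S i := fun i =>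
      exists_avoid (x i) ε hε (S i) (hScount i)
    choose y hy1 hy2 using hpick
    have hyball : y ∈ Metric.ball x ε := by
      rw [Metric.mem_ball, dist_pi_lt_iff hε]
      intro i
      rw [Real.dist_eq]
      exact hy1 i
    have hyO := hball hyball
    obtain ⟨v, hv⟩ := (mem_frakC_iff n k j y).mp (interior_subset hyO.1)
    obtain ⟨v', hv'⟩ := (mem_frakC_iff n k j' y).mp (interior_subset hyO.2)
    have hvo : ∀ (m : ℤ) (w : Fin (2 * n) → ℤ),
        (∀ i, y i - wv n k m w i ∈ Set.Icc (0 : ℝ) 1) →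
        ∀ i, y i - wv n k m w i ∈ Set.Ico (0 : ℝ) 1 := by
      intro m w hw i
      have h1 := hw i
      have hne1 : y i ≠ wv n k m w i + 1 := by
        intro hcon
        exact hy2 i (hS ▸ Or.inr ⟨(m, w), hcon.symm⟩)
      exact ⟨h1.1, lt_of_le_of_ne h1.2 (fun hcon => hne1 (by linarith))⟩
    have huniq := uniq_cover n k hn ((j : ℕ) : ℤ) ((j' : ℕ) : ℤ)
      (Int.ofNat_nonneg _) (by exact_mod_cast j.isLt)
      (Int.ofNat_nonneg _) (by exact_mod_cast j'.isLt)
      v v' y (hvo _ v hv) (hvo _ v' hv')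
    apply hne
    have : ((j : ℕ) : ℤ) = ((j' : ℕ) : ℤ) := huniq.1
    exact Fin.ext (by exact_mod_cast this)

end
end

section
/- The linear map φ : ℝ⁴ → ℝ⁴ given by φ(x₁,y₁,x₂,y₂) = (x₁+y₂, y₁, -y₂, y₁+x₂) is symplectic with respect to ω₀ = dx₁∧dy₁ + dx₂∧dy₂, and for c > 0 it maps the product R(c) × R(c) of rectangles R(c) = (0,1)×(0,c) injectively into ℝ² × ((-c,0) × (0, c+1)), with the property that the composition with the projection ℝ² → ℝ²/ℤ² on the first factor is still injective on φ(R(c) × R(c)). -/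
noncomputable section

/-- `ℝ⁴` with coordinates `((x₁,y₁),(x₂,y₂))`. -/
abbrev V4 : Type := (ℝ × ℝ) × (ℝ × ℝ)

/-- The standard symplectic form `ω₀ = dx₁∧dy₁ + dx₂∧dy₂` on `ℝ⁴`. -/
def om4 (u v : V4) : ℝ :=
  (u.1.1 * v.1.2 - u.1.2 * v.1.1) + (u.2.1 * v.2.2 - u.2.2 * v.2.1)

/-- The linear map `φ(x₁,y₁,x₂,y₂) = (x₁+y₂, y₁, -y₂, y₁+x₂)`. -/
def phi4 (p : V4) : V4 :=
  ((p.1.1 + p.2.2, p.1.2), (-p.2.2, p.1.2 + p.2.1))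

/-- The rectangle `R(c) = (0,1) × (0,c)`. -/
def Rrect (c : ℝ) : Set (ℝ × ℝ) := Set.Ioo (0 : ℝ) 1 ×ˢ Set.Ioo (0 : ℝ) c

/-- The projection `ℝ² → ℝ²/ℤ² = T²` followed by the identity on the second `ℝ²` factor,
composed with `φ`. -/
def phiTorus (p : V4) : (AddCircle (1 : ℝ) × AddCircle (1 : ℝ)) × (ℝ × ℝ) :=
  ((((phi4 p).1.1 : AddCircle (1 : ℝ)), ((phi4 p).1.2 : AddCircle (1 : ℝ))), (phi4 p).2)

theorem eq_of_coe_eq (a b : ℝ) (hab : |a - b| < 1) (h : (a : AddCircle (1:ℝ)) = b) : a = b := by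
  have h2 : a - b ∈ AddSubgroup.zmultiples (1:ℝ) := QuotientAddGroup.eq_iff_sub_mem.mp h
  obtain ⟨n, hn⟩ := AddSubgroup.mem_zmultiples_iff.mp h2
  simp only [zsmul_eq_mul, mul_one] at hn
  have h3 : |(n:ℝ)| < 1 := by rw [hn]; exact hab
  have h4 : n = 0 := by
    have h5 := abs_lt.mp h3
    have : -1 < n ∧ n < 1 := by exact_mod_cast h5
    omega
  rw [h4] at hn; push_cast at hn; linarith

/-- **The embedding trick for `T² × ℝ²`.** The linear map `φ` is symplectic for `ω₀`,
injective, maps `R(c) × R(c)` into `ℝ² × ((-c,0) × (0,c+1))`, and its composition with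
the projection `ℝ² → ℝ²/ℤ²` on the first factor is still injective on `R(c) × R(c)`. -/
theorem phi4_symplectic_embedding (c : ℝ) (hc : 0 < c) :
    (∀ u v : V4, om4 (phi4 u) (phi4 v) = om4 u v) ∧
    Function.Injective phi4 ∧
    (∀ p ∈ Rrect c ×ˢ Rrect c, (phi4 p).2 ∈ Set.Ioo (-c) (0 : ℝ) ×ˢ Set.Ioo (0 : ℝ) (c + 1)) ∧
    Set.InjOn phiTorus (Rrect c ×ˢ Rrect c) := by
  refine ⟨?_, ?_, ?_, ?_⟩
  · intro u v; simp only [om4, phi4]; ring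
  · intro p q h
    simp only [phi4, Prod.mk.injEq, neg_inj] at h
    obtain ⟨⟨h1, h2⟩, h3, h4⟩ := h
    have : p = ((p.1.1, p.1.2), (p.2.1, p.2.2)) := rfl
    rw [this]
    have : q = ((q.1.1, q.1.2), (q.2.1, q.2.2)) := rfl
    rw [this]
    simp only [Prod.mk.injEq]
    exact ⟨⟨by linarith, h2⟩, by linarith, h3⟩
  · rintro ⟨⟨x₁, y₁⟩, x₂, y₂⟩ hp
    simp only [Rrect, Set.mem_prod, Set.mem_Ioo] at hp
    obtain ⟨⟨⟨hx1, hx1'⟩, hy1, hy1'⟩, ⟨hx2, hx2'⟩, hy2, hy2'⟩ := hp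
    simp only [phi4, Set.mem_prod, Set.mem_Ioo]
    constructor <;> constructor <;> linarith
  · rintro ⟨⟨x₁, y₁⟩, x₂, y₂⟩ hp ⟨⟨a₁, b₁⟩, a₂, b₂⟩ hq h
    simp only [Rrect, Set.mem_prod, Set.mem_Ioo] at hp hq
    obtain ⟨⟨⟨hx1, hx1'⟩, hy1, hy1'⟩, ⟨hx2, hx2'⟩, hy2, hy2'⟩ := hp
    obtain ⟨⟨⟨ha1, ha1'⟩, hb1, hb1'⟩, ⟨ha2, ha2'⟩, hb2, hb2'⟩ := hq
    simp only [phiTorus, phi4, Prod.mk.injEq, neg_inj] at h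
    obtain ⟨⟨ht1, ht2⟩, hs1, hs2⟩ := h
    -- y₂ = b₂
    have e2 : y₂ = b₂ := hs1
    -- y₁ = b₁ : y₁ - b₁ = a₂ - x₂ ∈ (-1,1), and y₁ ≡ b₁ mod 1
    have e1 : y₁ = b₁ := by
      refine eq_of_coe_eq _ _ ?_ ht2
      have : y₁ - b₁ = a₂ - x₂ := by linarith
      rw [abs_lt]; constructor <;> linarith
    have e3 : x₂ = a₂ := by linarith
    have e4 : x₁ = a₁ := by
      have h' : ((x₁ : ℝ) : AddCircle (1:ℝ)) = a₁ := by
        have : x₁ + y₂ = (x₁ + y₂ : ℝ) := rfl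
        have key : ((x₁ + y₂ : ℝ) : AddCircle (1:ℝ)) = ((a₁ + b₂ : ℝ) : AddCircle (1:ℝ)) := ht1
        rw [e2] at key
        have := congrArg (fun z => z - ((b₂ : ℝ) : AddCircle (1:ℝ))) key
        simpa [AddCircle.coe_add] using this
      refine eq_of_coe_eq _ _ ?_ h'
      rw [abs_lt]; constructor <;> linarith
    simp [e1, e2, e3, e4]
end
end
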